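/- arXiv:1611.02199 — 2 statements merged into one kernel-verified Lean document; each statement's English description precedes it below -/
import Mathlib

section
/- In the setting of T-orthogonal projection onto a closed subspace R₀ with penalization: if Π₀h is the T-orthogonal projection of h onto R₀ with |Π₀h|_H ≤ 1, and Π_ρ h ∈ R₀ minimizes ν ↦ Q(h − ν) + ρ|ν|_H² over R₀, then Q(Π_ρ h − Π₀h) ≤ ρ|Π₀h|_H² ≤ ρ. -/
open scoped RealInnerProductSpace

/-- Penalized `T`-projection bound: if `Π₀h` is the `T`-orthogonal projection of `h`
onto `R₀` with `‖Π₀h‖ ≤ 1`, and `Π_ρ h` minimizes the penalized objective over `R₀`,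
then `Q(Π_ρ h − Π₀h) ≤ ρ‖Π₀h‖² ≤ ρ`. -/
theorem stmt_9 {H : Type*} [NormedAddCommGroup H] [InnerProductSpace ℝ H]
    (T : H →L[ℝ] H)
    (hsa : ∀ x y : H, ⟪T x, y⟫ = ⟪x, T y⟫)
    (hpos : ∀ x : H, 0 ≤ ⟪T x, x⟫)
    (R₀ : Submodule ℝ H) (hclosed : IsClosed (R₀ : Set H))
    (h : H) (ρ : ℝ) (hρ : 0 < ρ)
    (p₀ : H) (hp₀ : p₀ ∈ R₀) (hp₀norm : ‖p₀‖ ≤ 1)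
    (horth : ∀ ν ∈ R₀, ⟪T (h - p₀), ν⟫ = 0)
    (pρ : H) (hpρ : pρ ∈ R₀)
    (hmin : ∀ ν ∈ R₀, ⟪T (h - pρ), h - pρ⟫ + ρ * ‖pρ‖ ^ 2 ≤
      ⟪T (h - ν), h - ν⟫ + ρ * ‖ν‖ ^ 2) :
    ⟪T (pρ - p₀), pρ - p₀⟫ ≤ ρ * ‖p₀‖ ^ 2 ∧ ρ * ‖p₀‖ ^ 2 ≤ ρ := by
  have hd : pρ - p₀ ∈ R₀ := R₀.sub_mem hpρ hp₀
  have ho : ⟪T (h - p₀), pρ - p₀⟫ = 0 := horth _ hd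
  have hkey := hmin p₀ hp₀
  have hexp : ⟪T (h - pρ), h - pρ⟫ =
      ⟪T (h - p₀), h - p₀⟫ - 2 * ⟪T (h - p₀), pρ - p₀⟫ + ⟪T (pρ - p₀), pρ - p₀⟫ := by
    have e : h - pρ = (h - p₀) - (pρ - p₀) := by abel
    have hc : ∀ x y : H, ⟪T x, y⟫ = ⟪T y, x⟫ := fun x y =>
      (hsa x y).trans (real_inner_comm x (T y)).symm
    rw [e, map_sub, inner_sub_left,
      inner_sub_right (𝕜 := ℝ) (T (h - p₀)) (h - p₀) (pρ - p₀),
      inner_sub_right (𝕜 := ℝ) (T (pρ - p₀)) (h - p₀) (pρ - p₀),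
      hc (pρ - p₀) (h - p₀)]
    ring
  have hq : (0:ℝ) ≤ ‖pρ‖ ^ 2 := by positivity
  constructor
  · nlinarith [hq]
  · have h1 : ‖p₀‖ ^ 2 ≤ 1 := by nlinarith [norm_nonneg p₀]
    nlinarith
end

section
/- Let (ω_k)_{k≥1} and (ω_{nk})_{k≥1} be summable sequences of nonnegative reals with Σ_k ω_{nk} ≤ c for a fixed constant c, and let (N_k) be i.i.d. standard normal random variables. If sup_{k≤L} |ω_{nk} − ω_k| → 0 as n → ∞ for every fixed L, and there is a summable positive sequence (a_k) with sup_k ω_{nk}/a_k bounded, then Σ_k ω_{nk} N_k² − Σ_k ω_k N_k² → 0 in probability as n → ∞. -/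
open MeasureTheory ProbabilityTheory Filter
open scoped ENNReal Topology

/-!
Both weight sequences are dominated by the summable `b_k = Cb a_k + ω_k`, so dominated
convergence for series gives `∑_k |ω_{nk} - ω_k| → 0`. Since `E N_k² = m < ∞` for every `k`,
`E |Ŝ_n - S| ≤ m ∑_k |ω_{nk} - ω_k|`: the difference tends to `0` in `L¹`, hence in probability.
-/

lemma abs_tsum_sub_tsum_le_tsum_abs_sub {f g : ℕ → ℝ} (hf : Summable f) (hg : Summable g) :
    |∑' k, f k - ∑' k, g k| ≤ ∑' k, |f k - g k| := by
  rw [← hf.tsum_sub hg]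
  simpa only [Real.norm_eq_abs] using norm_tsum_le_tsum_norm (hf.sub hg).norm

lemma tendsto_tsum_abs_sub_of_dominated {α : Type*} {l : Filter α} {f : α → ℕ → ℝ}
    {g b : ℕ → ℝ} (hb : Summable b) (hfg : ∀ k, Tendsto (f · k) l (𝓝 (g k)))
    (hf : ∀ n k, |f n k| ≤ b k) (hg : ∀ k, |g k| ≤ b k) :
    Tendsto (fun n => ∑' k, |f n k - g k|) l (𝓝 0) := by
  have hlim : ∀ k, Tendsto (fun n => |f n k - g k|) l (𝓝 0) := fun k => by
    simpa using ((hfg k).sub (tendsto_const_nhds (x := g k))).abs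
  have hbound : ∀ n k, ‖|f n k - g k|‖ ≤ 2 * b k := fun n k => by
    rw [norm_abs_eq_norm, Real.norm_eq_abs, two_mul]
    exact (abs_sub _ _).trans (add_le_add (hf n k) (hg k))
  simpa using tendsto_tsum_of_dominated_convergence (hb.mul_left 2) hlim
    (Eventually.of_forall hbound)

section WeightedSeries

variable {Ω : Type*} [MeasurableSpace Ω] {μ : Measure Ω} {Y : ℕ → Ω → ℝ} {M : ℝ≥0∞}

lemma lintegral_tsum_ofReal_mul_le (hY : ∀ k, AEMeasurable (Y k) μ)
    (hM : ∀ k, ∫⁻ x, ENNReal.ofReal (Y k x) ∂μ ≤ M) {d : ℕ → ℝ} (hd : ∀ k, 0 ≤ d k)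
    (hds : Summable d) :
    ∫⁻ x, ∑' k, ENNReal.ofReal (d k * Y k x) ∂μ ≤ ENNReal.ofReal (∑' k, d k) * M := by
  rw [lintegral_tsum fun k => ((hY k).const_mul (d k)).ennreal_ofReal,
    ENNReal.ofReal_tsum_of_nonneg hd hds, ← ENNReal.tsum_mul_right]
  refine ENNReal.tsum_le_tsum fun k => ?_
  simp_rw [ENNReal.ofReal_mul (hd k)]
  rw [lintegral_const_mul'' _ (hY k).ennreal_ofReal]
  exact mul_le_mul_right (hM k) _

lemma ae_summable_mul (hY : ∀ k, AEMeasurable (Y k) μ) (hY0 : ∀ k x, 0 ≤ Y k x)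
    (hM : ∀ k, ∫⁻ x, ENNReal.ofReal (Y k x) ∂μ ≤ M) (hMtop : M ≠ ∞) {d : ℕ → ℝ}
    (hd : ∀ k, 0 ≤ d k) (hds : Summable d) :
    ∀ᵐ x ∂μ, Summable fun k => d k * Y k x := by
  have hfin := (lintegral_tsum_ofReal_mul_le hY hM hd hds).trans_lt
    (ENNReal.mul_lt_top ENNReal.ofReal_lt_top hMtop.lt_top)
  filter_upwards [ae_lt_top' (AEMeasurable.tsum fun k =>
    ((hY k).const_mul (d k)).ennreal_ofReal) hfin.ne] with x hx
  refine (ENNReal.summable_toReal hx.ne).congr fun k => ?_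
  exact ENNReal.toReal_ofReal (mul_nonneg (hd k) (hY0 k x))

lemma eLpNorm_one_tsum_mul_sub_tsum_mul_le (hY : ∀ k, AEMeasurable (Y k) μ)
    (hY0 : ∀ k x, 0 ≤ Y k x) (hM : ∀ k, ∫⁻ x, ENNReal.ofReal (Y k x) ∂μ ≤ M)
    (hMtop : M ≠ ∞) {u v b : ℕ → ℝ} (hb : Summable b) (hu : ∀ k, |u k| ≤ b k)
    (hv : ∀ k, |v k| ≤ b k) :
    eLpNorm (fun x => ∑' k, u k * Y k x - ∑' k, v k * Y k x) 1 μ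
      ≤ ENNReal.ofReal (∑' k, |u k - v k|) * M := by
  have hb0 : ∀ k, 0 ≤ b k := fun k => (abs_nonneg _).trans (hu k)
  -- `tsum` is `0` on non-summable series, so the pointwise estimate needs a.e. summability.
  have hsum {d : ℕ → ℝ} (hd : ∀ k, |d k| ≤ b k) : ∀ᵐ x ∂μ, Summable fun k => d k * Y k x := by
    filter_upwards [ae_summable_mul hY hY0 hM hMtop hb0 hb] with x hx
    refine hx.of_norm_bounded fun k => ?_
    rw [Real.norm_eq_abs, abs_mul, abs_of_nonneg (hY0 k x)]
    exact mul_le_mul_of_nonneg_right (hd k) (hY0 k x)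
  have habs (k : ℕ) (x : Ω) : |u k * Y k x - v k * Y k x| = |u k - v k| * Y k x := by
    rw [← sub_mul, abs_mul, abs_of_nonneg (hY0 k x)]
  have hΔ : Summable fun k => |u k - v k| :=
    .of_nonneg_of_le (fun _ => abs_nonneg _) (fun k => (abs_sub _ _).trans
      (add_le_add (hu k) (hv k))) (hb.add hb)
  rw [eLpNorm_one_eq_lintegral_enorm]
  refine (lintegral_mono_ae ?_).trans
    (lintegral_tsum_ofReal_mul_le hY hM (fun _ => abs_nonneg _) hΔ)
  filter_upwards [hsum hu, hsum hv] with x hux hvx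
  have hΔx : Summable fun k => |u k - v k| * Y k x := (hux.sub hvx).abs.congr (habs · x)
  calc ‖∑' k, u k * Y k x - ∑' k, v k * Y k x‖ₑ
      = ENNReal.ofReal |∑' k, u k * Y k x - ∑' k, v k * Y k x| := Real.enorm_eq_ofReal_abs _
    _ ≤ ENNReal.ofReal (∑' k, |u k - v k| * Y k x) := by
      refine ENNReal.ofReal_le_ofReal ?_
      simpa only [habs] using abs_tsum_sub_tsum_le_tsum_abs_sub hux hvx
    _ = ∑' k, ENNReal.ofReal (|u k - v k| * Y k x) :=
      ENNReal.ofReal_tsum_of_nonneg (fun k => mul_nonneg (abs_nonneg _) (hY0 k x)) hΔx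

theorem tendstoInMeasure_tsum_mul_sub_tsum_mul (hY : ∀ k, AEMeasurable (Y k) μ)
    (hY0 : ∀ k x, 0 ≤ Y k x) (hM : ∀ k, ∫⁻ x, ENNReal.ofReal (Y k x) ∂μ ≤ M)
    (hMtop : M ≠ ∞) {w : ℕ → ℝ} {wn : ℕ → ℕ → ℝ} {b : ℕ → ℝ} (hb : Summable b)
    (hconv : ∀ k, Tendsto (wn · k) atTop (𝓝 (w k)))
    (hwn : ∀ n k, |wn n k| ≤ b k) (hw : ∀ k, |w k| ≤ b k) :
    TendstoInMeasure μ (fun n x => ∑' k, wn n k * Y k x - ∑' k, w k * Y k x) atTop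
      (fun _ => 0) := by
  have hmeas (d : ℕ → ℝ) : AEMeasurable (fun x => ∑' k, d k * Y k x) μ :=
    .tsum fun k => (hY k).const_mul (d k)
  refine tendstoInMeasure_of_tendsto_eLpNorm one_ne_zero
    (fun n => ((hmeas (wn n)).sub (hmeas w)).aestronglyMeasurable)
    aestronglyMeasurable_const ?_
  have hbound : Tendsto (fun n => ENNReal.ofReal (∑' k, |wn n k - w k|) * M) atTop (𝓝 0) := by
    simpa using ENNReal.Tendsto.mul_const
      (ENNReal.tendsto_ofReal (tendsto_tsum_abs_sub_of_dominated hb hconv hwn hw)) (.inr hMtop)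
  refine tendsto_of_tendsto_of_tendsto_of_le_of_le tendsto_const_nhds hbound
    (fun _ => zero_le) fun n => ?_
  simpa [Pi.sub_def] using
    eLpNorm_one_tsum_mul_sub_tsum_mul_le hY hY0 hM hMtop hb (hwn n) hw

end WeightedSeries

theorem stmt_14_general {Ω : Type*} [MeasurableSpace Ω] (μ : Measure Ω)
    (N : ℕ → Ω → ℝ) (hNmeas : ∀ k, Measurable (N k))
    (hNlaw : ∀ k, μ.map (N k) = gaussianReal 0 1)
    (w : ℕ → ℝ) (wn : ℕ → ℕ → ℝ)
    (hw : ∀ k, 0 ≤ w k) (hwn : ∀ n k, 0 ≤ wn n k)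
    (hwsum : Summable w)
    (hconv : ∀ k, Tendsto (fun n => wn n k) atTop (nhds (w k)))
    (a : ℕ → ℝ) (hasum : Summable a)
    (Cb : ℝ) (hdom : ∀ n k, wn n k ≤ Cb * a k) :
    TendstoInMeasure μ
      (fun n x => (∑' k, wn n k * (N k x) ^ 2) - ∑' k, w k * (N k x) ^ 2)
      atTop (fun _ => (0 : ℝ)) := by
  have hM (k : ℕ) : ∫⁻ x, ENNReal.ofReal (N k x ^ 2) ∂μ
      = ∫⁻ y, ENNReal.ofReal (y ^ 2) ∂gaussianReal 0 1 := by
    rw [← hNlaw k, lintegral_map (by fun_prop) (hNmeas k)]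
  have hMtop : ∫⁻ y, ENNReal.ofReal (y ^ 2) ∂gaussianReal 0 1 ≠ ∞ :=
    (memLp_id_gaussianReal 2).integrable_sq.lintegral_lt_top.ne
  have hCa (k : ℕ) : 0 ≤ Cb * a k := (hwn 0 k).trans (hdom 0 k)
  refine tendstoInMeasure_tsum_mul_sub_tsum_mul (Y := fun k x => N k x ^ 2)
    (fun k => ((hNmeas k).pow_const 2).aemeasurable) (fun k x => sq_nonneg _)
    (fun k => (hM k).le) hMtop ((hasum.mul_left Cb).add hwsum) hconv
    (fun n k => ?_) (fun k => ?_)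
  · rw [abs_of_nonneg (hwn n k)]
    exact (hdom n k).trans (le_add_of_nonneg_right (hw k))
  · rw [abs_of_nonneg (hw k)]
    exact le_add_of_nonneg_left (hCa k)

/-- If the nonnegative weights `ω_{nk}` converge to `ω_k` for each fixed `k`, have
uniformly bounded sums `∑_k ω_{nk} ≤ c`, and are dominated by a summable sequence
`a_k` (up to a constant), then for i.i.d. standard normals `N_k` the weighted
chi-square sums satisfy `∑_k ω_{nk}N_k² − ∑_k ω_k N_k² → 0` in probability. -/
theorem stmt_14 {Ω : Type*} [MeasurableSpace Ω] (μ : Measure Ω) [IsProbabilityMeasure μ]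
    (N : ℕ → Ω → ℝ) (hNmeas : ∀ k, Measurable (N k))
    (hNlaw : ∀ k, μ.map (N k) = gaussianReal 0 1)
    (hNindep : iIndepFun N μ)
    (w : ℕ → ℝ) (wn : ℕ → ℕ → ℝ) (c : ℝ)
    (hw : ∀ k, 0 ≤ w k) (hwn : ∀ n k, 0 ≤ wn n k)
    (hwsum : Summable w) (hwnsum : ∀ n, Summable (wn n))
    (hc : ∀ n, ∑' k, wn n k ≤ c)
    (hconv : ∀ k, Tendsto (fun n => wn n k) atTop (nhds (w k)))
    (a : ℕ → ℝ) (ha : ∀ k, 0 < a k) (hasum : Summable a)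
    (Cb : ℝ) (hdom : ∀ n k, wn n k ≤ Cb * a k) :
    TendstoInMeasure μ
      (fun n x => (∑' k, wn n k * (N k x) ^ 2) - ∑' k, w k * (N k x) ^ 2)
      atTop (fun _ => (0 : ℝ)) :=
  stmt_14_general μ N hNmeas hNlaw w wn hw hwn hwsum hconv a hasum Cb hdom
end
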